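/- arXiv:1805.03271 — 2 statements merged into one kernel-verified Lean document; each statement's English description precedes it below -/
import Mathlib

section
/- Under the stability condition λn < 1−ε (with 0 < λ < 1, 0 < ε < 1, n ≥ 1), the PGF of the steady-state delay D (in frames) of the frame-synchronous bulk-arrival queue equals G_D(s) = (1 − λn/(1−ε)) · (1−s)·((1−λ)^n (1−εs)^n − (1−λ+(λ−ε)s)^n) / ((1−(1−λ)^n)·(s(1−εs)^n − (1−λ+(λ−ε)s)^n)). -/
/-- PGF of the indicator of at least one arrival in a frame of `n` channel uses. -/
noncomputable def GI (lam : ℝ) (n : ℕ) (s : ℝ) : ℝ :=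
  (1 - lam) ^ n + s * (1 - (1 - lam) ^ n)

/-- Inverse of `GI`. -/
noncomputable def GIinv (lam : ℝ) (n : ℕ) (s : ℝ) : ℝ :=
  (s - (1 - lam) ^ n) / (1 - (1 - lam) ^ n)

/-- PGF of a geometric service time on {1,2,...} with parameter `1-ε`. -/
noncomputable def GS1 (ε s : ℝ) : ℝ := (1 - ε) * s / (1 - ε * s)

/-- PGF of the bulk size (positive-conditioned Binomial(n,λ)). -/
noncomputable def GX (lam : ℝ) (n : ℕ) (s : ℝ) : ℝ :=
  ((1 - lam + lam * s) ^ n - (1 - lam) ^ n) / (1 - (1 - lam) ^ n)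

/-- PGF of the bulk service time. -/
noncomputable def GS (lam ε : ℝ) (n : ℕ) (s : ℝ) : ℝ := GX lam n (GS1 ε s)

/-- PGF of the number of bulks arriving during one bulk's service time. -/
noncomputable def GV (lam ε : ℝ) (n : ℕ) (s : ℝ) : ℝ := GS lam ε n (GI lam n s)

/-- Steady-state queue-size PGF (Pollaczek–Khinchine-type formula). -/
noncomputable def GLq (lam ε : ℝ) (n : ℕ) (s : ℝ) : ℝ :=
  (1 - lam * n / (1 - ε)) * (s - 1) * GV lam ε n s / (s - GV lam ε n s)

/-!
Since `GIinv` inverts `GI`, `GV (GIinv s) = GS s`. Writing `A = (1-λ)^n`, the bulk service PGF is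
`GS s = ((1-λ+(λ-ε)s)^n - A(1-εs)^n) / ((1-A)(1-εs)^n)`, and `GIinv s - GS s` has the same
denominator, which therefore cancels in the Pollaczek–Khinchine quotient. Where the remaining
denominator `s(1-εs)^n - (1-λ+(λ-ε)s)^n` vanishes, both sides are `0` because `x / 0 = 0`.
-/

section

variable {lam ε : ℝ} {n : ℕ} {s : ℝ}

theorem GI_GIinv (ha : 1 - (1 - lam) ^ n ≠ 0) : GI lam n (GIinv lam n s) = s := by
  rw [GI, GIinv, div_mul_cancel₀ _ ha]
  ring

theorem GIinv_sub_one (ha : 1 - (1 - lam) ^ n ≠ 0) :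
    GIinv lam n s - 1 = (s - 1) / (1 - (1 - lam) ^ n) := by
  rw [GIinv, div_sub_one ha]
  ring

theorem one_sub_add_mul_GS1 (hc : 1 - ε * s ≠ 0) :
    1 - lam + lam * GS1 ε s = (1 - lam + (lam - ε) * s) / (1 - ε * s) := by
  rw [GS1, eq_div_iff hc]
  field_simp
  ring

theorem GS_eq_div (hc : 1 - ε * s ≠ 0) :
    GS lam ε n s = ((1 - lam + (lam - ε) * s) ^ n - (1 - lam) ^ n * (1 - ε * s) ^ n)
      / ((1 - (1 - lam) ^ n) * (1 - ε * s) ^ n) := by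
  rw [GS, GX, one_sub_add_mul_GS1 hc, div_pow, div_sub' (pow_ne_zero n hc), div_div]
  ring

theorem GIinv_sub_GS (hc : 1 - ε * s ≠ 0) :
    GIinv lam n s - GS lam ε n s = (s * (1 - ε * s) ^ n - (1 - lam + (lam - ε) * s) ^ n)
      / ((1 - (1 - lam) ^ n) * (1 - ε * s) ^ n) := by
  rw [GIinv, GS_eq_div hc, ← mul_div_mul_right _ _ (pow_ne_zero n hc), div_sub_div_same]
  ring

end

theorem stmt8_general (lam ε : ℝ) (n : ℕ) (hn : 1 ≤ n)
    (hlam0 : 0 < lam) (hlam1 : lam < 1) (hε1 : ε < 1) :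
    ∀ s ∈ Set.Ioo (0 : ℝ) 1,
      GLq lam ε n (GIinv lam n s)
        = (1 - lam * n / (1 - ε)) *
            ((1 - s) * ((1 - lam) ^ n * (1 - ε * s) ^ n - (1 - lam + (lam - ε) * s) ^ n))
          / ((1 - (1 - lam) ^ n) * (s * (1 - ε * s) ^ n - (1 - lam + (lam - ε) * s) ^ n)) := by
  rintro s ⟨hs0, hs1⟩
  have ha : 1 - (1 - lam) ^ n ≠ 0 :=
    (sub_pos.2 (pow_lt_one₀ (by linarith) (by linarith) (by omega))).ne'
  have hc : 1 - ε * s ≠ 0 := by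
    rcases le_or_gt ε 0 with hε | hε <;> nlinarith
  have hden : (1 - (1 - lam) ^ n) * (1 - ε * s) ^ n ≠ 0 := mul_ne_zero ha (pow_ne_zero n hc)
  rw [GLq, GV, GI_GIinv ha, GIinv_sub_one ha, GIinv_sub_GS hc, GS_eq_div hc, mul_div_assoc,
    div_div_div_cancel_right₀ hden, mul_div_assoc _ ((1 - s) * _), ← div_mul_div_comm]
  ring

/-- Theorem 1: under the stability condition `λn < 1-ε`, the PGF
`G_D(s) = G_L(G_I^{-1}(s))` of the steady-state delay (in frames) of the
frame-synchronous bulk-arrival queue equals the displayed closed form. -/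
theorem stmt8 (lam ε : ℝ) (n : ℕ) (hn : 1 ≤ n)
    (hlam0 : 0 < lam) (hlam1 : lam < 1) (hε0 : 0 < ε) (hε1 : ε < 1)
    (hstab : lam * n < 1 - ε) :
    ∀ s ∈ Set.Ioo (0 : ℝ) 1,
      GLq lam ε n (GIinv lam n s)
        = (1 - lam * n / (1 - ε)) *
            ((1 - s) * ((1 - lam) ^ n * (1 - ε * s) ^ n - (1 - lam + (lam - ε) * s) ^ n))
          / ((1 - (1 - lam) ^ n) * (s * (1 - ε * s) ^ n - (1 - lam + (lam - ε) * s) ^ n)) :=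
  stmt8_general lam ε n hn hlam0 hlam1 hε1
end

section
/- In the frame-asynchronous model with parameters 0 < λ < 1, 0 < ε < 1, n ≥ 1 and λn < 1−ε, the PGF of the steady-state peak age of information P is G_P(s) = ((1−ε)s^n / (1 − ε s^n)) · (G_{D'}(s) − (1−s)·G_{D'}((1−λ)s)/(1 − (1−λ)s)), where G_{D'} is the frame-asynchronous steady-state delay PGF (s−1)(1−ε−λn)s^n/(s − (1−λ) − (λ+ε(s−1))s^n). -/
open MeasureTheory ProbabilityTheory

/-- The frame-asynchronous steady-state delay PGF (Theorem 3). -/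
noncomputable def GDasync (lam ε : ℝ) (n : ℕ) (s : ℝ) : ℝ :=
  (s - 1) * (1 - ε - lam * n) * s ^ n / (s - (1 - lam) - (lam + ε * (s - 1)) * s ^ n)

/-!
By independence, `E[s ^ (max(D', T) + S)] = E[s ^ max(D', T)] · E[s ^ S]`, and `E[s ^ S]` is a
geometric series. For the first factor, fix `D' = d` and sum the geometric law of `T` separately
over `t ≤ d` and `t > d`: this gives
`E[s ^ max(d, T)] = s ^ d - (1 - s) / (1 - (1 - λ) s) · ((1 - λ) s) ^ d`,
and averaging over `d` turns the two terms into `G_{D'}(s)` and `G_{D'}((1 - λ) s)`.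
-/

lemma abs_pow_le_one_of_abs_le_one {x : ℝ} (hx : |x| ≤ 1) (j : ℕ) : |x ^ j| ≤ 1 := by
  rw [abs_pow]
  exact pow_le_one₀ (abs_nonneg x) hx

lemma tsum_geometric_mul_pow_max {q s : ℝ} (h : |q * s| < 1) (d : ℕ) :
    ∑' t, q ^ t * (1 - q) * s ^ max d (t + 1)
      = s ^ d - (1 - s) / (1 - q * s) * (q * s) ^ d := by
  have hhead : ∀ t ∈ Finset.range d,
      q ^ t * (1 - q) * s ^ max d (t + 1) = (1 - q) * q ^ t * s ^ d :=
    fun t ht => by rw [max_eq_left (Finset.mem_range.mp ht)]; ring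
  have htail : ∀ i, q ^ (i + d) * (1 - q) * s ^ max d (i + d + 1)
      = (1 - q) * s * (q * s) ^ d * (q * s) ^ i :=
    fun i => by rw [max_eq_right (by omega)]; ring
  have hsum : Summable fun t => q ^ t * (1 - q) * s ^ max d (t + 1) :=
    (summable_nat_add_iff d).mp <| by
      simp_rw [htail]; exact (summable_geometric_of_abs_lt_one h).mul_left _
  have hqs : 1 - q * s ≠ 0 := by linarith [le_abs_self (q * s)]
  rw [← hsum.sum_add_tsum_nat_add d, Finset.sum_congr rfl hhead, ← Finset.sum_mul,
    ← Finset.mul_sum, mul_neg_geom_sum, tsum_congr htail, tsum_mul_left,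
    tsum_geometric_of_abs_lt_one h]
  field_simp
  ring

section

variable {Ω : Type*} [MeasurableSpace Ω] {μ : Measure Ω}

lemma integral_comp_eq_tsum_measureReal [IsFiniteMeasure μ] {X : Ω → ℕ} (hX : Measurable X)
    {f : ℕ → ℝ} {C : ℝ} (hf : ∀ j, |f j| ≤ C) :
    ∫ ω, f (X ω) ∂μ = ∑' j, μ.real {ω | X ω = j} * f j := by
  have hfm : Measurable f := .of_discrete
  rw [← integral_map hX.aemeasurable hfm.aestronglyMeasurable,
    integral_countable (.of_bound hfm.aestronglyMeasurable C (ae_of_all _ hf))]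
  simp [map_measureReal_apply hX (measurableSet_singleton _), Set.preimage]

lemma ProbabilityTheory.IndepFun.integral_comp_eq_integral_integral [IsFiniteMeasure μ]
    {α β : Type*} [MeasurableSpace α] [MeasurableSpace β] {X : Ω → α} {Y : Ω → β}
    (hX : Measurable X) (hY : Measurable Y) (hXY : IndepFun X Y μ) {f : α × β → ℝ}
    (hf : StronglyMeasurable f) (hfi : Integrable f ((μ.map X).prod (μ.map Y))) :
    ∫ ω, f (X ω, Y ω) ∂μ = ∫ ω, ∫ ω', f (X ω, Y ω') ∂μ ∂μ := by
  rw [← integral_map (hX.prodMk hY).aemeasurable hf.aestronglyMeasurable,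
    (indepFun_iff_map_prod_eq_prod_map_map hX.aemeasurable hY.aemeasurable).mp hXY,
    integral_prod f hfi,
    integral_map hX.aemeasurable hf.integral_prod_right'.aestronglyMeasurable]
  congr 1 with x
  exact integral_map hY.aemeasurable
    (hf.comp_measurable measurable_prodMk_left).aestronglyMeasurable

lemma measure_setOf_eq_zero_eq_zero_of_geometric [IsProbabilityMeasure μ] {X : Ω → ℕ}
    (hX : Measurable X) {q : ℝ} (hq0 : 0 ≤ q) (hq1 : q < 1)
    (hgeo : ∀ k : ℕ, 1 ≤ k → μ {ω | X ω = k} = ENNReal.ofReal (q ^ (k - 1) * (1 - q))) :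
    μ {ω | X ω = 0} = 0 := by
  have hsucc : ∀ k : ℕ, μ.real {ω | X ω = k + 1} = q ^ k * (1 - q) := fun k => by
    rw [measureReal_def, hgeo (k + 1) k.succ_pos,
      ENNReal.toReal_ofReal (mul_nonneg (pow_nonneg hq0 _) (by linarith)), Nat.add_sub_cancel]
  have hsum : Summable fun k => μ.real {ω | X ω = k + 1} :=
    ((summable_geometric_of_lt_one hq0 hq1).mul_right _).congr fun k => (hsucc k).symm
  have htotal := integral_comp_eq_tsum_measureReal (μ := μ) hX (f := fun _ => (1 : ℝ)) (C := 1)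
    (fun _ => abs_one.le)
  simp only [integral_const, probReal_univ, one_smul, mul_one] at htotal
  rw [tsum_eq_zero_add' (f := fun j => μ.real {ω | X ω = j}) hsum, tsum_congr hsucc,
    tsum_mul_right, tsum_geometric_of_lt_one hq0 hq1, inv_mul_cancel₀ (by linarith)] at htotal
  exact (measureReal_eq_zero_iff).mp (by linarith)

lemma integral_comp_eq_tsum_of_geometric_multiple [IsFiniteMeasure μ] {X : Ω → ℕ}
    (hX : Measurable X) {n : ℕ} (hn : 1 ≤ n) {q : ℝ} (hq0 : 0 ≤ q) (hq1 : q ≤ 1)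
    (hgeo : ∀ k : ℕ, 1 ≤ k →
      μ {ω | X ω = k * n} = ENNReal.ofReal (q ^ (k - 1) * (1 - q)))
    (hsupp : ∀ j : ℕ, (¬ ∃ k : ℕ, 1 ≤ k ∧ j = k * n) → μ {ω | X ω = j} = 0)
    {f : ℕ → ℝ} {C : ℝ} (hf : ∀ j, |f j| ≤ C) :
    ∫ ω, f (X ω) ∂μ = ∑' k, q ^ k * (1 - q) * f ((k + 1) * n) := by
  have hinj : Function.Injective fun k : ℕ => (k + 1) * n := fun a b hab => by
    simpa using Nat.eq_of_mul_eq_mul_right hn hab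
  have hsupp' : Function.support (fun j => μ.real {ω | X ω = j} * f j)
      ⊆ Set.range fun k => (k + 1) * n := by
    intro j hj
    by_contra hjr
    refine hj (show μ.real {ω | X ω = j} * f j = 0 from ?_)
    rw [measureReal_def, hsupp j ?_, ENNReal.toReal_zero, zero_mul]
    rintro ⟨k, hk, rfl⟩
    exact hjr ⟨k - 1, congrArg (· * n) (Nat.sub_add_cancel hk)⟩
  rw [integral_comp_eq_tsum_measureReal hX hf, ← hinj.tsum_eq hsupp']
  congr 1 with k
  rw [measureReal_def, hgeo (k + 1) k.succ_pos,
    ENNReal.toReal_ofReal (mul_nonneg (pow_nonneg hq0 _) (by linarith)), Nat.add_sub_cancel]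

lemma integral_pow_of_geometric_multiple [IsFiniteMeasure μ] {X : Ω → ℕ}
    (hX : Measurable X) {n : ℕ} (hn : 1 ≤ n) {q : ℝ} (hq0 : 0 ≤ q) (hq1 : q < 1)
    (hgeo : ∀ k : ℕ, 1 ≤ k →
      μ {ω | X ω = k * n} = ENNReal.ofReal (q ^ (k - 1) * (1 - q)))
    (hsupp : ∀ j : ℕ, (¬ ∃ k : ℕ, 1 ≤ k ∧ j = k * n) → μ {ω | X ω = j} = 0)
    {s : ℝ} (hs : |s| ≤ 1) :
    ∫ ω, s ^ X ω ∂μ = (1 - q) * s ^ n / (1 - q * s ^ n) := by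
  have hqs : |q * s ^ n| < 1 := by
    rw [abs_mul, abs_of_nonneg hq0]
    nlinarith [abs_pow_le_one_of_abs_le_one hs n, abs_nonneg (s ^ n)]
  have hterm : ∀ k : ℕ,
      q ^ k * (1 - q) * s ^ ((k + 1) * n) = (1 - q) * s ^ n * (q * s ^ n) ^ k :=
    fun k => by rw [mul_comm (k + 1), pow_mul]; ring
  rw [integral_comp_eq_tsum_of_geometric_multiple hX hn hq0 hq1.le hgeo hsupp
      (abs_pow_le_one_of_abs_le_one hs), tsum_congr hterm, tsum_mul_left,
    tsum_geometric_of_abs_lt_one hqs, div_eq_mul_inv]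

lemma integral_pow_max_of_geometric [IsProbabilityMeasure μ] {D T : Ω → ℕ}
    (hD : Measurable D) (hT : Measurable T) (hDT : IndepFun D T μ)
    {q : ℝ} (hq0 : 0 ≤ q) (hq1 : q < 1)
    (hgeo : ∀ k : ℕ, 1 ≤ k → μ {ω | T ω = k} = ENNReal.ofReal (q ^ (k - 1) * (1 - q)))
    {s : ℝ} (hs : |s| ≤ 1) :
    ∫ ω, s ^ max (D ω) (T ω) ∂μ
      = ∫ ω, s ^ D ω ∂μ - (1 - s) / (1 - q * s) * ∫ ω, (q * s) ^ D ω ∂μ := by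
  have hqs : |q * s| < 1 := by
    rw [abs_mul, abs_of_nonneg hq0]
    nlinarith [abs_nonneg s]
  have hsupp : ∀ j : ℕ, (¬ ∃ k : ℕ, 1 ≤ k ∧ j = k * 1) → μ {ω | T ω = j} = 0 := by
    intro j hj
    obtain rfl : j = 0 := by
      by_contra h
      exact hj ⟨j, Nat.one_le_iff_ne_zero.mpr h, (mul_one j).symm⟩
    exact measure_setOf_eq_zero_eq_zero_of_geometric hT hq0 hq1 hgeo
  have hinner (d : ℕ) :
      ∫ ω, s ^ max d (T ω) ∂μ = s ^ d - (1 - s) / (1 - q * s) * (q * s) ^ d := by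
    rw [integral_comp_eq_tsum_of_geometric_multiple hT le_rfl hq0 hq1.le (by simpa using hgeo)
      hsupp (fun j => abs_pow_le_one_of_abs_le_one hs (max d j)),
      ← tsum_geometric_mul_pow_max hqs d]
    simp only [mul_one]
  have hbound : ∀ p : ℕ × ℕ, ‖s ^ max p.1 p.2‖ ≤ 1 := fun p =>
    abs_pow_le_one_of_abs_le_one hs _
  rw [hDT.integral_comp_eq_integral_integral hD hT (f := fun p => s ^ max p.1 p.2)
    .of_discrete (.of_bound Measurable.of_discrete.aestronglyMeasurable 1 (ae_of_all _ hbound))]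
  have hint {x : ℝ} (hx : |x| ≤ 1) : Integrable (fun ω => x ^ D ω) μ :=
    .of_bound (by fun_prop) 1 (ae_of_all _ fun ω => abs_pow_le_one_of_abs_le_one hx _)
  simp_rw [hinner]
  rw [integral_sub (hint hs) ((hint hqs.le).const_mul _), integral_const_mul]

end

theorem stmt16_general {Ω : Type*} [MeasurableSpace Ω] (μ : Measure Ω) [IsProbabilityMeasure μ]
    (lam ε : ℝ) (n : ℕ) (hn : 1 ≤ n)
    (hlam0 : 0 < lam) (hlam1 : lam < 1) (hε0 : 0 < ε) (hε1 : ε < 1)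
    (D T S : Ω → ℕ) (hD : Measurable D) (hT : Measurable T) (hS : Measurable S)
    (hindep : iIndepFun (fun i : Fin 3 => ![D, T, S] i) μ)
    (hTgeo : ∀ k : ℕ, 1 ≤ k →
      μ {ω | T ω = k} = ENNReal.ofReal ((1 - lam) ^ (k - 1) * lam))
    (hSdist : ∀ k : ℕ, 1 ≤ k →
      μ {ω | S ω = k * n} = ENNReal.ofReal (ε ^ (k - 1) * (1 - ε)))
    (hSsupp : ∀ j : ℕ, (¬ ∃ k : ℕ, 1 ≤ k ∧ j = k * n) → μ {ω | S ω = j} = 0)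
    (hDpgf : ∀ s ∈ Set.Ioo (0 : ℝ) 1, ∫ ω, s ^ (D ω) ∂μ = GDasync lam ε n s) :
    ∀ s ∈ Set.Ioo (0 : ℝ) 1,
      ∫ ω, s ^ (max (D ω) (T ω) + S ω) ∂μ
        = (1 - ε) * s ^ n / (1 - ε * s ^ n) *
            (GDasync lam ε n s
              - (1 - s) * GDasync lam ε n ((1 - lam) * s) / (1 - (1 - lam) * s)) := by
  rintro s ⟨hs0, hs1⟩
  have hs : |s| ≤ 1 := abs_le.mpr ⟨by linarith, hs1.le⟩
  have hmeas (i : Fin 3) : Measurable (![D, T, S] i) := by fin_cases i <;> assumption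
  have hDT : IndepFun D T μ := by simpa using hindep.indepFun (show (0 : Fin 3) ≠ 1 by decide)
  have hDT_S : IndepFun (fun ω => (D ω, T ω)) S μ := by
    simpa using hindep.indepFun_prodMk hmeas 0 1 2 (by decide) (by decide)
  have hTgeo' : ∀ k : ℕ, 1 ≤ k →
      μ {ω | T ω = k} = ENNReal.ofReal ((1 - lam) ^ (k - 1) * (1 - (1 - lam))) := by
    simpa only [sub_sub_cancel] using hTgeo
  calc ∫ ω, s ^ (max (D ω) (T ω) + S ω) ∂μ
      = (∫ ω, s ^ max (D ω) (T ω) ∂μ) * ∫ ω, s ^ S ω ∂μ := by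
        simp_rw [pow_add]
        exact hDT_S.integral_fun_comp_mul_comp (f := fun p => s ^ max p.1 p.2)
          (g := fun k => s ^ k) (hD.prodMk hT).aemeasurable hS.aemeasurable
          Measurable.of_discrete.aestronglyMeasurable Measurable.of_discrete.aestronglyMeasurable
    _ = _ := by
        rw [integral_pow_max_of_geometric hD hT hDT (by linarith) (by linarith) hTgeo' hs,
          integral_pow_of_geometric_multiple hS hn hε0.le hε1 hSdist hSsupp hs,
          hDpgf s ⟨hs0, hs1⟩, hDpgf ((1 - lam) * s) ⟨by nlinarith, by nlinarith⟩]
        ring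

/-- Theorem 4, frame-asynchronous case: with `P = max(D', T₂-T₁) + S`, where
`D'` is the steady-state delay (with PGF `G_{D'}`), `T₂-T₁` is geometric with
parameter `λ`, `S` takes value `kn` with probability `ε^{k-1}(1-ε)`, and the
three are mutually independent, the PGF of the steady-state peak age `P` is
`G_P(s) = ((1-ε)s^n/(1-εs^n)) · (G_{D'}(s) - (1-s)G_{D'}((1-λ)s)/(1-(1-λ)s))`. -/
theorem stmt16 {Ω : Type*} [MeasurableSpace Ω] (μ : Measure Ω) [IsProbabilityMeasure μ]
    (lam ε : ℝ) (n : ℕ) (hn : 1 ≤ n)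
    (hlam0 : 0 < lam) (hlam1 : lam < 1) (hε0 : 0 < ε) (hε1 : ε < 1)
    (hstab : lam * n < 1 - ε)
    (D T S : Ω → ℕ) (hD : Measurable D) (hT : Measurable T) (hS : Measurable S)
    (hindep : iIndepFun (fun i : Fin 3 => ![D, T, S] i) μ)
    (hTgeo : ∀ k : ℕ, 1 ≤ k →
      μ {ω | T ω = k} = ENNReal.ofReal ((1 - lam) ^ (k - 1) * lam))
    (hSdist : ∀ k : ℕ, 1 ≤ k →
      μ {ω | S ω = k * n} = ENNReal.ofReal (ε ^ (k - 1) * (1 - ε)))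
    (hSsupp : ∀ j : ℕ, (¬ ∃ k : ℕ, 1 ≤ k ∧ j = k * n) → μ {ω | S ω = j} = 0)
    (hDpgf : ∀ s ∈ Set.Ioo (0 : ℝ) 1, ∫ ω, s ^ (D ω) ∂μ = GDasync lam ε n s) :
    ∀ s ∈ Set.Ioo (0 : ℝ) 1,
      ∫ ω, s ^ (max (D ω) (T ω) + S ω) ∂μ
        = (1 - ε) * s ^ n / (1 - ε * s ^ n) *
            (GDasync lam ε n s
              - (1 - s) * GDasync lam ε n ((1 - lam) * s) / (1 - (1 - lam) * s)) :=
  stmt16_general μ lam ε n hn hlam0 hlam1 hε0 hε1 D T S hD hT hS hindep hTgeo hSdist hSsupp hDpgf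
end
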